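/- (Variational characterization of the von Neumann entropy.) Let ρ be a density matrix on ℂ^d. Then S(ρ) equals the infimum, over all self-adjoint (Hermitian) d×d complex matrices L, of the quantity Re tr(ρ L) + log(Re tr(exp(−L))), where exp is the matrix exponential. (Equivalently, S(ρ) is the infimum of −tr(ρ log σ) over all positive-definite density matrices σ.) -/

import Mathlib

open scoped BigOperators ComplexOrder

/-- Von Neumann entropy: `-∑ λᵢ log λᵢ` over the eigenvalues of a Hermitian matrix. -/
noncomputable def vonNeumannEntropy {d : ℕ} (ρ : Matrix (Fin d) (Fin d) ℂ) : ℝ :=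
  if h : ρ.IsHermitian then -∑ i, h.eigenvalues i * Real.log (h.eigenvalues i) else 0

/-!
Write `ρ = U diag(λ) U*` and let `q` be the diagonal of `U* L U`. For Hermitian `L` with spectrum
`μ`, the vector `q` is `P μ` for the doubly stochastic matrix `P = (|(U* V)ᵢⱼ|²)`, `V` an
eigenbasis of `L`; so convexity of `exp` gives Peierls' inequality `∑ exp (-qᵢ) ≤ tr exp (-L)`.
The classical Gibbs inequality `-∑ λ log λ ≤ ∑ λ q + log ∑ exp (-q)` then shows that every value
of the objective is at least `S(ρ)`. Conversely, `L = -log (ρ + t)` has `tr (ρ L) ≤ S(ρ)` and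
`tr exp (-L) = 1 + d t`, so the objective comes within `d t` of `S(ρ)`.
-/

open Matrix NormedSpace

theorem Real.sub_le_mul_log_sub_mul_log {x y : ℝ} (hx : 0 ≤ x) (hy : 0 < y) :
    x - y ≤ x * Real.log x - x * Real.log y := by
  rcases hx.eq_or_lt with rfl | hx
  · simpa using hy.le
  have h := mul_le_mul_of_nonneg_left (Real.self_sub_one_le_mul_log (div_nonneg hx.le hy.le)) hy.le
  rw [Real.log_div hx.ne' hy.ne'] at h
  field_simp at h
  linarith

theorem Real.neg_sum_mul_log_le_sum_mul_add_log_sum_exp {ι : Type*} [Fintype ι] (p q : ι → ℝ)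
    (hp : ∀ i, 0 ≤ p i) (hp1 : ∑ i, p i = 1) :
    -∑ i, p i * Real.log (p i) ≤ ∑ i, p i * q i + Real.log (∑ i, Real.exp (-q i)) := by
  set Z := ∑ i, Real.exp (-q i)
  have hZ : 0 < Z := Finset.sum_pos (fun i _ => Real.exp_pos _)
    (Finset.nonempty_of_sum_ne_zero (hp1.trans_ne one_ne_zero))
  -- compare `p` with the Gibbs distribution `exp (-q i) / Z`
  have key (i : ι) :
      p i - Real.exp (-q i) / Z ≤ p i * Real.log (p i) + p i * q i + p i * Real.log Z := by
    have h := Real.sub_le_mul_log_sub_mul_log (hp i) (div_pos (Real.exp_pos (-q i)) hZ)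
    rw [Real.log_div (Real.exp_ne_zero _) hZ.ne', Real.log_exp] at h
    linear_combination h
  have hsum := Finset.sum_le_sum fun i (_ : i ∈ Finset.univ) => key i
  rw [Finset.sum_sub_distrib, ← Finset.sum_div, div_self hZ.ne', hp1, sub_self,
    Finset.sum_add_distrib, Finset.sum_add_distrib, ← Finset.sum_mul, hp1, one_mul] at hsum
  linarith

theorem CFC.exp_cfc {A : Type*} [NormedRing A] [StarRing A] [NormedAlgebra ℝ A]
    [ContinuousFunctionalCalculus ℝ A IsSelfAdjoint] [ContinuousMap.UniqueHom ℝ A]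
    (f : ℝ → ℝ) (a : A) (hf : ContinuousOn f (spectrum ℝ a) := by cfc_cont_tac)
    (ha : IsSelfAdjoint a := by cfc_tac) :
    exp (cfc f a) = cfc (fun x => Real.exp (f x)) a := by
  rw [← CFC.real_exp_eq_normedSpace_exp (cfc_predicate f a), ← cfc_comp' Real.exp f a]

namespace Matrix

variable {n 𝕜 : Type*} [RCLike 𝕜] [Fintype n] [DecidableEq n]

theorem sum_comp_mulVec_le_of_mem_doublyStochastic {M : Matrix n n ℝ}
    (hM : M ∈ doublyStochastic ℝ n) {s : Set ℝ} {f : ℝ → ℝ} (hf : ConvexOn ℝ s f) {x : n → ℝ}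
    (hx : ∀ j, x j ∈ s) : ∑ i, f ((M *ᵥ x) i) ≤ ∑ j, f (x j) :=
  calc ∑ i, f ((M *ᵥ x) i) ≤ ∑ i, ∑ j, M i j * f (x j) :=
        Finset.sum_le_sum fun i _ => hf.map_sum_le (fun j _ => nonneg_of_mem_doublyStochastic hM)
          (sum_row_of_mem_doublyStochastic hM i) fun j _ => hx j
    _ = ∑ j, f (x j) := by
        rw [Finset.sum_comm]
        simp_rw [← Finset.sum_mul, sum_col_of_mem_doublyStochastic hM, one_mul]

theorem of_norm_sq_mem_doublyStochastic {W : Matrix n n 𝕜} (hW : W ∈ unitaryGroup n 𝕜) :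
    (of fun i j => ‖W i j‖ ^ 2) ∈ doublyStochastic ℝ n := by
  rw [mem_doublyStochastic_iff_sum]
  refine ⟨fun i j => sq_nonneg ‖W i j‖, fun i => ?_, fun j => ?_⟩
  · have h := congr_fun₂ (mem_unitaryGroup_iff.mp hW) i i
    simp only [mul_apply, star_apply, RCLike.star_def, RCLike.mul_conj, one_apply_eq] at h
    exact_mod_cast h
  · have h := congr_fun₂ (mem_unitaryGroup_iff'.mp hW) j j
    simp only [mul_apply, star_apply, RCLike.star_def, RCLike.conj_mul, one_apply_eq] at h
    exact_mod_cast h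

theorem mul_diagonal_mul_star_apply_self (W : Matrix n n 𝕜) (μ : n → ℝ) (i : n) :
    (W * diagonal (RCLike.ofReal ∘ μ) * star W : Matrix n n 𝕜) i i =
      (((of fun i j => ‖W i j‖ ^ 2) *ᵥ μ) i : ℝ) := by
  rw [mul_apply]
  simp only [mul_diagonal, star_apply, RCLike.star_def, mulVec, dotProduct, of_apply,
    Function.comp_apply, RCLike.ofReal_sum, RCLike.ofReal_mul, RCLike.ofReal_pow]
  refine Finset.sum_congr rfl fun j _ => ?_
  rw [mul_right_comm, RCLike.mul_conj]

namespace IsHermitian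

variable {A : Matrix n n 𝕜} (hA : A.IsHermitian)
include hA

theorem sum_eigenvalues_eq_one (htr : A.trace = 1) : ∑ i, hA.eigenvalues i = 1 := by
  exact_mod_cast hA.trace_eq_sum_eigenvalues.symm.trans htr

theorem sum_convexOn_conj_apply_self_le {U : Matrix n n 𝕜} (hU : U ∈ unitaryGroup n 𝕜)
    {s : Set ℝ} {f : ℝ → ℝ} (hf : ConvexOn ℝ s f) (hs : ∀ i, hA.eigenvalues i ∈ s) :
    ∑ i, f (RCLike.re ((star U * A * U) i i)) ≤ ∑ i, f (hA.eigenvalues i) := by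
  set W := star U * (hA.eigenvectorUnitary : Matrix n n 𝕜)
  have hW : W ∈ unitaryGroup n 𝕜 :=
    Submonoid.mul_mem _ (Unitary.star_mem hU) hA.eigenvectorUnitary.2
  have hconj : star U * A * U = W * diagonal (RCLike.ofReal ∘ hA.eigenvalues) * star W := by
    conv_lhs => rw [hA.spectral_theorem, Unitary.conjStarAlgAut_apply]
    simp [W, mul_assoc]
  simp_rw [hconj, mul_diagonal_mul_star_apply_self, RCLike.ofReal_re]
  exact sum_comp_mulVec_le_of_mem_doublyStochastic (of_norm_sq_mem_doublyStochastic hW) hf hs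

theorem trace_mul (B : Matrix n n 𝕜) :
    (A * B).trace = ∑ i, hA.eigenvalues i *
      (star (hA.eigenvectorUnitary : Matrix n n 𝕜) * B * hA.eigenvectorUnitary) i i := by
  conv_lhs => rw [hA.spectral_theorem, Unitary.conjStarAlgAut_apply, mul_assoc, trace_mul_cycle]
  simp [trace, mul_diagonal, mul_comm]

theorem trace_cfc (f : ℝ → ℝ) : (cfc f A).trace = ((∑ i, f (hA.eigenvalues i) : ℝ) : 𝕜) := by
  rw [hA.cfc_eq, IsHermitian.cfc, Unitary.conjStarAlgAut_apply, trace_mul_cycle,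
    Unitary.coe_star_mul_self, one_mul, trace_diagonal, RCLike.ofReal_sum]
  rfl

end IsHermitian

open scoped Matrix.Norms.L2Operator in
theorem IsHermitian.trace_exp_cfc {A : Matrix n n ℂ} (hA : A.IsHermitian) (f : ℝ → ℝ) :
    (NormedSpace.exp (cfc f A)).trace = ((∑ i, Real.exp (f (hA.eigenvalues i)) : ℝ) : ℂ) := by
  rw [CFC.exp_cfc f A (A.finite_real_spectrum.continuousOn f) hA.isSelfAdjoint, hA.trace_cfc]
  rfl

end Matrix

theorem vonNeumannEntropy_eq {d : ℕ} {ρ : Matrix (Fin d) (Fin d) ℂ} (hρ : ρ.IsHermitian) :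
    vonNeumannEntropy ρ = -∑ i, hρ.eigenvalues i * Real.log (hρ.eigenvalues i) :=
  dif_pos hρ

theorem vonNeumannEntropy_le {d : ℕ} {ρ L : Matrix (Fin d) (Fin d) ℂ} (hρ : ρ.PosSemidef)
    (hρtr : ρ.trace = 1) (hL : L.IsHermitian) :
    vonNeumannEntropy ρ ≤ ((ρ * L).trace).re + Real.log ((exp (-L)).trace.re) := by
  set U := (hρ.isHermitian.eigenvectorUnitary : Matrix (Fin d) (Fin d) ℂ)
  set q := fun i => ((star U * L * U) i i).re
  have hsum := hρ.isHermitian.sum_eigenvalues_eq_one hρtr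
  have htr : ((ρ * L).trace).re = ∑ i, hρ.isHermitian.eigenvalues i * q i := by
    simp [hρ.isHermitian.trace_mul, q, U]
  have hexp : (exp (-L)).trace.re = ∑ i, Real.exp (-hL.eigenvalues i) := by
    rw [← cfc_neg_id (R := ℝ) L hL.isSelfAdjoint, hL.trace_exp_cfc, Complex.ofReal_re]
  have hpeierls : ∑ i, Real.exp (-q i) ≤ ∑ i, Real.exp (-hL.eigenvalues i) :=
    hL.sum_convexOn_conj_apply_self_le hρ.isHermitian.eigenvectorUnitary.2
      (convexOn_exp.comp_linearMap (-LinearMap.id)) fun _ => Set.mem_univ _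
  have hpos : 0 < ∑ i, Real.exp (-q i) := Finset.sum_pos (fun i _ => Real.exp_pos _)
    (Finset.nonempty_of_sum_ne_zero (hsum.trans_ne one_ne_zero))
  rw [vonNeumannEntropy_eq hρ.isHermitian, htr, hexp]
  exact (Real.neg_sum_mul_log_le_sum_mul_add_log_sum_exp _ q hρ.eigenvalues_nonneg hsum).trans
    (by gcongr)

theorem exists_isHermitian_le_vonNeumannEntropy_add {d : ℕ} {ρ : Matrix (Fin d) (Fin d) ℂ}
    (hρ : ρ.PosSemidef) (hρtr : ρ.trace = 1) {t : ℝ} (ht : 0 < t) :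
    ∃ L : Matrix (Fin d) (Fin d) ℂ, L.IsHermitian ∧
      ((ρ * L).trace).re + Real.log ((exp (-L)).trace.re) ≤ vonNeumannEntropy ρ + d * t := by
  have hρ' := hρ.isHermitian
  set ev := hρ'.eigenvalues
  have hev (i : Fin d) : 0 ≤ ev i := hρ.eigenvalues_nonneg i
  set g : ℝ → ℝ := fun x => -Real.log (x + t)
  have hcont (f : ℝ → ℝ) : ContinuousOn f (spectrum ℝ ρ) := ρ.finite_real_spectrum.continuousOn f
  refine ⟨cfc g ρ, cfc_predicate g ρ, ?_⟩
  have htr : ((ρ * cfc g ρ).trace).re = ∑ i, ev i * g (ev i) := by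
    nth_rewrite 1 [← cfc_id' ℝ ρ hρ'.isSelfAdjoint]
    rw [← cfc_mul _ _ ρ (hcont _) (hcont _), hρ'.trace_cfc]
    exact RCLike.ofReal_re (K := ℂ) _
  have hexp : (exp (-cfc g ρ)).trace.re = 1 + d * t := by
    rw [← cfc_neg, hρ'.trace_exp_cfc, Complex.ofReal_re]
    simp only [g, neg_neg]
    rw [Finset.sum_congr rfl fun i _ => Real.exp_log (by linarith [hev i] : 0 < ev i + t),
      Finset.sum_add_distrib, hρ'.sum_eigenvalues_eq_one hρtr]
    simp
  have hmono (i : Fin d) : ev i * g (ev i) ≤ -(ev i * Real.log (ev i)) := by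
    rcases (hev i).eq_or_lt with h0 | hpos
    · simp [← h0]
    · rw [← mul_neg]
      exact mul_le_mul_of_nonneg_left (neg_le_neg (Real.log_le_log hpos (by linarith))) hpos.le
  have hlog : Real.log (1 + d * t) ≤ d * t := by
    linarith [Real.log_le_sub_one_of_pos (by positivity : (0 : ℝ) < 1 + d * t)]
  rw [htr, hexp, vonNeumannEntropy_eq hρ', ← Finset.sum_neg_distrib]
  exact add_le_add (Finset.sum_le_sum fun i _ => hmono i) hlog

/-- **Variational characterization of the von Neumann entropy.**
For a density matrix `ρ`, `S(ρ)` is the infimum over Hermitian matrices `L` of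
`Re tr(ρ L) + log (Re tr (exp (-L)))`. -/
theorem vonNeumannEntropy_eq_sInf {d : ℕ} (ρ : Matrix (Fin d) (Fin d) ℂ)
    (hρ : ρ.PosSemidef) (hρtr : ρ.trace = 1) :
    vonNeumannEntropy ρ =
      sInf {x : ℝ | ∃ L : Matrix (Fin d) (Fin d) ℂ, L.IsHermitian ∧
        x = ((ρ * L).trace).re + Real.log (((NormedSpace.exp (-L)).trace).re)} := by
  set S := {x : ℝ | ∃ L : Matrix (Fin d) (Fin d) ℂ, L.IsHermitian ∧
    x = ((ρ * L).trace).re + Real.log (((NormedSpace.exp (-L)).trace).re)}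
  have hlower : vonNeumannEntropy ρ ∈ lowerBounds S := by
    rintro _ ⟨L, hL, rfl⟩
    exact vonNeumannEntropy_le hρ hρtr hL
  have hne : S.Nonempty := ⟨_, 0, isHermitian_zero, rfl⟩
  refine le_antisymm (le_csInf hne hlower) ((Real.sInf_le_iff ⟨_, hlower⟩ hne).2 fun ε hε => ?_)
  have hd : (0 : ℝ) < d + 1 := by positivity
  obtain ⟨L, hL, hle⟩ := exists_isHermitian_le_vonNeumannEntropy_add hρ hρtr (div_pos hε hd)
  have hsmall : (d : ℝ) * (ε / (d + 1)) < ε := by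
    rw [mul_div_assoc', div_lt_iff₀ hd]
    nlinarith
  exact ⟨_, ⟨L, hL, rfl⟩, by linarith⟩
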